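/- arXiv:1604.06213 — 3 statements merged into one kernel-verified Lean document; each statement's English description precedes it below -/
import Mathlib

section
/- Let λ > 0 and 0 < ε < λ, and let ε̂ > 0 satisfy e^{-λ} + ε̂ ≤ (1+ε̂)e^{-(λ-ε)}. Let (v_n)_{n≥0} be a sequence of nonnegative real numbers and ζ₀, k > 0 such that for all n ≥ 0, v_n ≤ k ζ₀ e^{-λ n} + ε̂ ∑_{j=0}^{n-1} v_j e^{-λ(n-j-1)} (the sum being empty for n = 0). Then for all n ≥ 0, v_n ≤ (1+ε̂)^n e^{-n(λ-ε)} k ζ₀. -/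
/-- Discrete Gronwall-type lemma (Lemma 2.5 / l1b). -/
theorem stmt0 (lam eps epsh : ℝ) (hlam : 0 < lam) (heps : 0 < eps) (heps' : eps < lam)
    (hepsh : 0 < epsh)
    (hineq : Real.exp (-lam) + epsh ≤ (1 + epsh) * Real.exp (-(lam - eps)))
    (v : ℕ → ℝ) (hv0 : ∀ n, 0 ≤ v n) (ζ₀ k : ℝ) (hζ : 0 < ζ₀) (hk : 0 < k)
    (hrec : ∀ n : ℕ, v n ≤ k * ζ₀ * Real.exp (-(lam * n)) +
      epsh * ∑ j ∈ Finset.range n, v j * Real.exp (-(lam * ((n : ℝ) - j - 1)))) :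
    ∀ n : ℕ, v n ≤ (1 + epsh) ^ n * Real.exp (-((n : ℝ) * (lam - eps))) * k * ζ₀ := by
  set u : ℕ → ℝ := fun j => v j * Real.exp (lam * j) with hu
  set r : ℝ := epsh * Real.exp lam with hrdef
  set C : ℝ := k * ζ₀ with hCdef
  have hC : 0 < C := mul_pos hk hζ
  have hr : 0 < r := mul_pos hepsh (Real.exp_pos _)
  have hurec : ∀ n, u n ≤ C + r * ∑ j ∈ Finset.range n, u j := by
    intro n
    have h := hrec n
    have hm := mul_le_mul_of_nonneg_right h (Real.exp_pos (lam * n)).le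
    have hsum : (∑ j ∈ Finset.range n, v j * Real.exp (-(lam * ((n : ℝ) - j - 1)))) *
        Real.exp (lam * n) = Real.exp lam * ∑ j ∈ Finset.range n, u j := by
      rw [Finset.sum_mul, Finset.mul_sum]
      apply Finset.sum_congr rfl
      intro j hj
      have harg : -(lam * ((n : ℝ) - j - 1)) + lam * n = lam + lam * j := by ring
      rw [mul_assoc, ← Real.exp_add, harg, Real.exp_add, hu]
      ring
    calc u n = v n * Real.exp (lam * n) := rfl
      _ ≤ (C * Real.exp (-(lam * n)) + epsh * ∑ j ∈ Finset.range n,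
            v j * Real.exp (-(lam * ((n : ℝ) - j - 1)))) * Real.exp (lam * n) := hm
      _ = C * (Real.exp (-(lam * n)) * Real.exp (lam * n)) +
          epsh * ((∑ j ∈ Finset.range n, v j * Real.exp (-(lam * ((n : ℝ) - j - 1)))) *
            Real.exp (lam * n)) := by ring
      _ = C + r * ∑ j ∈ Finset.range n, u j := by
          rw [← Real.exp_add, neg_add_cancel, Real.exp_zero, hsum, hrdef]; ring
  have hT : ∀ n, C + r * ∑ j ∈ Finset.range n, u j ≤ C * (1 + r) ^ n := by
    intro n
    induction n with
    | zero => simp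
    | succ n ih =>
      rw [Finset.sum_range_succ, pow_succ]
      have h1 := hurec n
      nlinarith [mul_le_mul_of_nonneg_left h1 hr.le,
        mul_le_mul_of_nonneg_right ih (by linarith : (0:ℝ) ≤ 1 + r)]
  have hq : 1 + r ≤ (1 + epsh) * Real.exp eps := by
    have := mul_le_mul_of_nonneg_right hineq (Real.exp_pos lam).le
    have h1 : (Real.exp (-lam) + epsh) * Real.exp lam = 1 + r := by
      rw [hrdef, add_mul, ← Real.exp_add, neg_add_cancel, Real.exp_zero]
    have h2 : (1 + epsh) * Real.exp (-(lam - eps)) * Real.exp lam =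
        (1 + epsh) * Real.exp eps := by
      rw [mul_assoc, ← Real.exp_add]; ring_nf
    linarith [h1 ▸ h2 ▸ this]
  intro n
  have hun : u n ≤ C * ((1 + epsh) * Real.exp eps) ^ n := by
    refine (hurec n).trans ((hT n).trans ?_)
    have := pow_le_pow_left₀ (by linarith : (0:ℝ) ≤ 1 + r) hq n
    exact mul_le_mul_of_nonneg_left this hC.le
  have hv : v n = u n * Real.exp (-(lam * n)) := by
    rw [hu, mul_assoc, ← Real.exp_add, add_neg_cancel, Real.exp_zero, mul_one]
  rw [hv]
  calc u n * Real.exp (-(lam * n)) ≤ C * ((1 + epsh) * Real.exp eps) ^ n *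
        Real.exp (-(lam * n)) :=
        mul_le_mul_of_nonneg_right hun (Real.exp_pos _).le
    _ = (1 + epsh) ^ n * Real.exp (-((n : ℝ) * (lam - eps))) * k * ζ₀ := by
        rw [mul_pow, ← Real.exp_nat_mul, hCdef]
        have h3 : Real.exp ((n:ℝ) * eps) * Real.exp (-(lam * n)) =
            Real.exp (-((n : ℝ) * (lam - eps))) := by
          rw [← Real.exp_add]; congr 1; ring
        linear_combination ((1 + epsh) ^ n * k * ζ₀) * h3
end

section
/- Let A be a d×d real matrix with ‖e^{Ar}‖ ≤ M e^{-λ r} for all r ≥ 0 (M ≥ 1, λ > 0), let β ∈ (0,1) and 0 < s < t. Then sup_{0 ≤ r₁ < r₂ < s} ‖(e^{A(t-r₂)} - e^{A(s-r₂)}) - (e^{A(t-r₁)} - e^{A(s-r₁)})‖ / (r₂-r₁)^β ≤ M² ‖A‖² (t-s) s^{1-β}. -/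
/-!
Write `E r = exp (r • A)`. Since `E (t - r) = E (t - s) * E (s - r)`, the second difference
factors as `(E (t - s) - 1) * (E (s - r₂) - E (s - r₁))`. On `[0, ∞)` the semigroup is bounded
by `M`, so `r ↦ E r` is `M‖A‖`-Lipschitz there; this bounds the two factors by `M‖A‖(t - s)` and
`M‖A‖(r₂ - r₁)`. Finally `(r₂ - r₁) / (r₂ - r₁) ^ β = (r₂ - r₁) ^ (1 - β) ≤ s ^ (1 - β)`.
-/

open NormedSpace Set

section ExpSmul

variable {𝔸 : Type*} [NormedRing 𝔸] [NormedAlgebra ℝ 𝔸] [CompleteSpace 𝔸]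

theorem exp_add_smul (A : 𝔸) (a b : ℝ) : exp ((a + b) • A) = exp (a • A) * exp (b • A) := by
  have hrad : ∀ x : 𝔸, x ∈ Metric.eball 0 (expSeries ℝ 𝔸).radius := fun x =>
    (expSeries_radius_eq_top ℝ 𝔸).symm ▸ edist_lt_top _ _
  rw [add_smul]
  exact exp_add_of_commute_of_mem_ball (((Commute.refl A).smul_left a).smul_right b)
    (hrad _) (hrad _)

theorem exp_smul_sub_exp_smul_eq_mul (A : 𝔸) (r s t : ℝ) :
    exp ((t - r) • A) - exp ((s - r) • A) = (exp ((t - s) • A) - 1) * exp ((s - r) • A) := by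
  rw [sub_mul, one_mul, ← exp_add_smul, sub_add_sub_cancel]

theorem norm_exp_smul_sub_exp_smul_le {A : 𝔸} {C a b : ℝ} (hab : a ≤ b)
    (hC : ∀ r ∈ Icc a b, ‖exp (r • A)‖ ≤ C) :
    ‖exp (b • A) - exp (a • A)‖ ≤ C * ‖A‖ * (b - a) := by
  have hderiv : ∀ r ∈ Icc a b, ‖exp (r • A) * A‖ ≤ C * ‖A‖ := fun r hr =>
    (norm_mul_le _ _).trans (mul_le_mul_of_nonneg_right (hC r hr) (norm_nonneg A))
  have := (convex_Icc a b).norm_image_sub_le_of_norm_hasDerivWithin_le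
    (fun r _ => (hasDerivAt_exp_smul_const A r).hasDerivWithinAt) hderiv
    (left_mem_Icc.2 hab) (right_mem_Icc.2 hab)
  rwa [Real.norm_of_nonneg (sub_nonneg.2 hab)] at this

theorem norm_exp_smul_second_diff_le {A : 𝔸} {M r₁ r₂ s t : ℝ}
    (hM : ∀ r : ℝ, 0 ≤ r → ‖exp (r • A)‖ ≤ M)
    (hr₁₂ : r₁ ≤ r₂) (hr₂s : r₂ ≤ s) (hst : s ≤ t) :
    ‖(exp ((t - r₂) • A) - exp ((s - r₂) • A)) - (exp ((t - r₁) • A) - exp ((s - r₁) • A))‖ ≤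
      M ^ 2 * ‖A‖ ^ 2 * (t - s) * (r₂ - r₁) := by
  have hbound : ∀ a b : ℝ, 0 ≤ a → ∀ r ∈ Icc a b, ‖exp (r • A)‖ ≤ M := fun a b ha r hr =>
    hM r (ha.trans hr.1)
  have hM0 : 0 ≤ M := (norm_nonneg _).trans (hM 0 le_rfl)
  have hstep : ‖exp ((t - s) • A) - 1‖ ≤ M * ‖A‖ * (t - s) := by
    simpa using norm_exp_smul_sub_exp_smul_le (sub_nonneg.2 hst) (hbound 0 (t - s) le_rfl)
  have hlip : ‖exp ((s - r₂) • A) - exp ((s - r₁) • A)‖ ≤ M * ‖A‖ * (r₂ - r₁) := by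
    rw [norm_sub_rev, show r₂ - r₁ = (s - r₁) - (s - r₂) by ring]
    exact norm_exp_smul_sub_exp_smul_le (by linarith)
      (hbound _ _ (sub_nonneg.2 hr₂s))
  rw [exp_smul_sub_exp_smul_eq_mul, exp_smul_sub_exp_smul_eq_mul, ← mul_sub]
  calc _ ≤ ‖exp ((t - s) • A) - 1‖ * ‖exp ((s - r₂) • A) - exp ((s - r₁) • A)‖ :=
        norm_mul_le _ _
    _ ≤ (M * ‖A‖ * (t - s)) * (M * ‖A‖ * (r₂ - r₁)) :=
        mul_le_mul hstep hlip (norm_nonneg _) (by have := sub_nonneg.2 hst; positivity)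
    _ = M ^ 2 * ‖A‖ ^ 2 * (t - s) * (r₂ - r₁) := by ring

end ExpSmul

theorem div_rpow_le_mul_rpow_one_sub {x K h s β : ℝ} (hK : 0 ≤ K) (hh : 0 < h) (hhs : h ≤ s)
    (hβ : β ≤ 1) (hx : x ≤ K * h) : x / h ^ β ≤ K * s ^ (1 - β) := by
  rw [div_le_iff₀ (Real.rpow_pos_of_pos hh β)]
  calc x ≤ K * h := hx
    _ = K * h ^ (1 - β) * h ^ β := by
        rw [mul_assoc, ← Real.rpow_add hh, sub_add_cancel, Real.rpow_one]
    _ ≤ K * s ^ (1 - β) * h ^ β := by gcongr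

theorem stmt7_general (d : ℕ) (M lam β s t : ℝ) (hlam : 0 < lam)
    (hβ1 : β < 1) (hst : s < t)
    (A : EuclideanSpace ℝ (Fin d) →L[ℝ] EuclideanSpace ℝ (Fin d))
    (hexp : ∀ r : ℝ, 0 ≤ r → ‖NormedSpace.exp (r • A)‖ ≤ M * Real.exp (-lam * r)) :
    ∀ r₁ r₂ : ℝ, 0 ≤ r₁ → r₁ < r₂ → r₂ < s →
      ‖(NormedSpace.exp ((t - r₂) • A) - NormedSpace.exp ((s - r₂) • A)) -
          (NormedSpace.exp ((t - r₁) • A) - NormedSpace.exp ((s - r₁) • A))‖ /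
          (r₂ - r₁) ^ β ≤
        M ^ 2 * ‖A‖ ^ 2 * (t - s) * s ^ (1 - β) := by
  intro r₁ r₂ hr₁ hr₁₂ hr₂s
  have hM0 : 0 ≤ M := by simpa using (norm_nonneg _).trans (hexp 0 le_rfl)
  have hbound : ∀ r : ℝ, 0 ≤ r → ‖exp (r • A)‖ ≤ M := fun r hr =>
    (hexp r hr).trans <| mul_le_of_le_one_right hM0 <|
      Real.exp_le_one_iff.2 (by nlinarith)
  refine div_rpow_le_mul_rpow_one_sub (by have := sub_nonneg.2 hst.le; positivity)
    (sub_pos.2 hr₁₂) (by linarith) hβ1.le ?_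
  exact norm_exp_smul_second_diff_le hbound hr₁₂.le hr₂s.le hst.le

/-- Estimate (sem1): β-Hölder seminorm of r ↦ e^{A(t-r)} - e^{A(s-r)} on [0,s]
is bounded by M²‖A‖²(t-s)s^{1-β}. -/
theorem stmt7 (d : ℕ) (M lam β s t : ℝ) (hM : 1 ≤ M) (hlam : 0 < lam)
    (hβ : 0 < β) (hβ1 : β < 1) (hs : 0 < s) (hst : s < t)
    (A : EuclideanSpace ℝ (Fin d) →L[ℝ] EuclideanSpace ℝ (Fin d))
    (hexp : ∀ r : ℝ, 0 ≤ r → ‖NormedSpace.exp (r • A)‖ ≤ M * Real.exp (-lam * r)) :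
    ∀ r₁ r₂ : ℝ, 0 ≤ r₁ → r₁ < r₂ → r₂ < s →
      ‖(NormedSpace.exp ((t - r₂) • A) - NormedSpace.exp ((s - r₂) • A)) -
          (NormedSpace.exp ((t - r₁) • A) - NormedSpace.exp ((s - r₁) • A))‖ /
          (r₂ - r₁) ^ β ≤
        M ^ 2 * ‖A‖ ^ 2 * (t - s) * s ^ (1 - β) :=
  stmt7_general d M lam β s t hlam hβ1 hst A hexp
end

section
/- Let λ > 0, μ ∈ [0,λ), γ ∈ ℝ, and let ω : [0,∞) → ℝ be continuous with lim_{t→∞} |ω(t)|/t = 0. Let D : [0,∞) → ℝ be differentiable with D'(t) = e^{-γω(t)+λt} F̂(e^{γω(t)-λt} D(t)) where F̂ : ℝ → ℝ is continuous and satisfies |F̂(x)| ≤ μ|x| for all x. Then |D(t)| ≤ e^{μt} |D(0)| for all t ≥ 0, and consequently u(t) := e^{γω(t)-λt} D(t) satisfies e^{δt}|u(t)| → 0 as t → ∞ for every 0 ≤ δ < λ - μ. -/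
/-!
In the Doss–Sussmann variable `D = e^{λt - γω} u` the equation has no noise term, and the
conjugating exponentials cancel in `|D'| ≤ μ |D|`, so Grönwall gives `|D t| ≤ e^{μt} |D 0|`.
Hence `e^{δt} |u t| ≤ |D 0| e^{γω(t) + (δ + μ - λ) t}`, and the sublinear growth of `ω`
sends the exponent to `-∞` whenever `δ + μ < λ`.
-/

open Filter Topology Set

theorem norm_le_exp_mul_norm_of_norm_deriv_le {E : Type*} [NormedAddCommGroup E]
    [NormedSpace ℝ E] {f f' : ℝ → E} {K : ℝ}
    (hf : ∀ t, 0 ≤ t → HasDerivAt f (f' t) t) (bound : ∀ t, 0 ≤ t → ‖f' t‖ ≤ K * ‖f t‖)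
    {t : ℝ} (ht : 0 ≤ t) : ‖f t‖ ≤ Real.exp (K * t) * ‖f 0‖ := by
  have hcont : ContinuousOn f (Icc 0 t) := fun x hx =>
    (hf x hx.1).continuousAt.continuousWithinAt
  have h := norm_le_gronwallBound_of_norm_deriv_right_le hcont
    (fun x hx => (hf x hx.1).hasDerivWithinAt) le_rfl
    (ε := 0) (fun x hx => by rw [add_zero]; exact bound x hx.1) t ⟨ht, le_rfl⟩
  rwa [gronwallBound_ε0, sub_zero, mul_comm] at h

theorem abs_exp_neg_mul_le_of_abs_le {F : ℝ → ℝ} {μ : ℝ} (hF : ∀ x, |F x| ≤ μ * |x|)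
    (a x : ℝ) : |Real.exp (-a) * F (Real.exp a * x)| ≤ μ * |x| :=
  calc |Real.exp (-a) * F (Real.exp a * x)|
      = Real.exp (-a) * |F (Real.exp a * x)| := by rw [abs_mul, abs_of_pos (Real.exp_pos _)]
    _ ≤ Real.exp (-a) * (μ * (Real.exp a * |x|)) := by
      gcongr
      simpa [abs_mul, abs_of_pos (Real.exp_pos a)] using hF (Real.exp a * x)
    _ = μ * |x| := by
      rw [mul_left_comm, ← mul_assoc (Real.exp (-a)), ← Real.exp_add, neg_add_cancel,
        Real.exp_zero, one_mul]

theorem tendsto_const_mul_add_mul_atBot {g : ℝ → ℝ}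
    (hg : Tendsto (fun t => |g t| / t) atTop (𝓝 0)) (a : ℝ) {c : ℝ} (hc : c < 0) :
    Tendsto (fun t => a * g t + c * t) atTop atBot := by
  have hslope : Tendsto (fun t => a * g t / t + c) atTop (𝓝 c) := by
    have hag : Tendsto (fun t => a * g t / t) atTop (𝓝 0) := by
      refine squeeze_zero_norm' ?_ (by simpa using hg.const_mul |a|)
      filter_upwards [eventually_gt_atTop 0] with t ht
      rw [Real.norm_eq_abs, abs_div, abs_mul, abs_of_pos ht, mul_div_assoc]
    simpa using hag.add_const c
  refine (tendsto_id.atTop_mul_neg hc hslope).congr' ?_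
  filter_upwards [eventually_gt_atTop 0] with t ht
  simp only [id]
  field_simp

theorem stmt10_general (lam μ γ : ℝ)
    (ω : ℝ → ℝ)
    (hωgrow : Tendsto (fun t : ℝ => |ω t| / t) atTop (nhds 0))
    (Fh : ℝ → ℝ) (hFhb : ∀ x : ℝ, |Fh x| ≤ μ * |x|)
    (D : ℝ → ℝ)
    (hD : ∀ t : ℝ, 0 ≤ t → HasDerivAt D
      (Real.exp (-γ * ω t + lam * t) * Fh (Real.exp (γ * ω t - lam * t) * D t)) t) :
    (∀ t : ℝ, 0 ≤ t → |D t| ≤ Real.exp (μ * t) * |D 0|) ∧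
      ∀ δ : ℝ, 0 ≤ δ → δ < lam - μ →
        Tendsto (fun t : ℝ => Real.exp (δ * t) * |Real.exp (γ * ω t - lam * t) * D t|)
          atTop (nhds 0) := by
  have hDbound : ∀ t, 0 ≤ t → |D t| ≤ Real.exp (μ * t) * |D 0| :=
    fun t => norm_le_exp_mul_norm_of_norm_deriv_le hD fun s _ => by
      have h := abs_exp_neg_mul_le_of_abs_le hFhb (γ * ω s - lam * s) (D s)
      rwa [neg_sub, sub_eq_neg_add, ← neg_mul] at h
  refine ⟨hDbound, fun δ _ hδ => ?_⟩
  have hlim : Tendsto (fun t => |D 0| * Real.exp (γ * ω t + (δ + μ - lam) * t)) atTop (𝓝 0) := by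
    simpa using (Real.tendsto_exp_atBot.comp
      (tendsto_const_mul_add_mul_atBot hωgrow γ (by linarith))).const_mul |D 0|
  refine squeeze_zero' (Eventually.of_forall fun t => by positivity) ?_ hlim
  filter_upwards [eventually_ge_atTop 0] with t ht
  calc Real.exp (δ * t) * |Real.exp (γ * ω t - lam * t) * D t|
      = Real.exp (δ * t) * Real.exp (γ * ω t - lam * t) * |D t| := by
        rw [abs_mul, abs_of_pos (Real.exp_pos _), mul_assoc]
    _ ≤ Real.exp (δ * t) * Real.exp (γ * ω t - lam * t) * (Real.exp (μ * t) * |D 0|) := by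
        gcongr
        exact hDbound t ht
    _ = |D 0| * Real.exp (γ * ω t + (δ + μ - lam) * t) := by
        rw [mul_comm |D 0|, ← mul_assoc, ← Real.exp_add, ← Real.exp_add]
        ring_nf

/-- Global stability for scalar linear noise via the Doss–Sussmann transform:
|D(t)| ≤ e^{μt}|D(0)| and e^{δt}|u(t)| → 0 for 0 ≤ δ < λ - μ, where
u(t) = e^{γω(t) - λt} D(t). -/
theorem stmt10 (lam μ γ : ℝ) (hlam : 0 < lam) (hμ0 : 0 ≤ μ) (hμ : μ < lam)
    (ω : ℝ → ℝ) (hω : Continuous ω)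
    (hωgrow : Tendsto (fun t : ℝ => |ω t| / t) atTop (nhds 0))
    (Fh : ℝ → ℝ) (hFh : Continuous Fh) (hFhb : ∀ x : ℝ, |Fh x| ≤ μ * |x|)
    (D : ℝ → ℝ)
    (hD : ∀ t : ℝ, 0 ≤ t → HasDerivAt D
      (Real.exp (-γ * ω t + lam * t) * Fh (Real.exp (γ * ω t - lam * t) * D t)) t) :
    (∀ t : ℝ, 0 ≤ t → |D t| ≤ Real.exp (μ * t) * |D 0|) ∧
      ∀ δ : ℝ, 0 ≤ δ → δ < lam - μ →
        Tendsto (fun t : ℝ => Real.exp (δ * t) * |Real.exp (γ * ω t - lam * t) * D t|)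
          atTop (nhds 0) :=
  stmt10_general lam μ γ ω hωgrow Fh hFhb D hD
end
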